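/- Let d ≥ 1, let U, A, B be d × d unitary matrices, and let σ be a Hermitian d × d matrix with σ² = I. Define f(α) := C_HST(U, A·e^{−iασ/2}·B) for α ∈ ℝ. Then f is differentiable and satisfies the parameter-shift rule f'(α) = (1/2)( f(α + π/2) − f(α − π/2) ) for all α ∈ ℝ. -/

import Mathlib

/-!
Since `σ² = 1`, the exponential series splits into even and odd parts and
`e^{-iασ/2} = cos(α/2) - i sin(α/2) σ`. Hence `Tr(V(α)†U) = cos(α/2) p + i sin(α/2) s` for
two fixed traces `p, s`, and by the half-angle formulas `f(α) = K + a cos α + b sin α`. For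
such a first-order trigonometric polynomial `f(α ± π/2) = K ∓ a sin α ± b cos α`, so the
half-difference of the shifted values is exactly `f'(α)`.
-/

open Matrix Complex

noncomputable section

/-- The Hilbert-Schmidt test cost `C_HST(U,V) = 1 - |Tr(V†U)|²/d²` for `d × d` matrices. -/
def CHSTd (d : ℕ) (U V : Matrix (Fin d) (Fin d) ℂ) : ℝ :=
  1 - ‖(Vᴴ * U).trace‖ ^ 2 / (d : ℝ) ^ 2

/-- The rotation gate `G(α) = e^{-iασ/2}` generated by `σ`. -/
def rotGate (d : ℕ) (σ : Matrix (Fin d) (Fin d) ℂ) (α : ℝ) :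
    Matrix (Fin d) (Fin d) ℂ :=
  NormedSpace.exp ((-(α / 2 : ℝ) * Complex.I : ℂ) • σ)

theorem NormedSpace.exp_mul_I_smul_of_mul_self_eq_one {𝔸 : Type*} [Ring 𝔸] [Algebra ℂ 𝔸]
    [TopologicalSpace 𝔸] [IsTopologicalRing 𝔸] [ContinuousSMul ℂ 𝔸]
    [T2Space 𝔸] {x : 𝔸} (hx : x * x = 1) (z : ℂ) :
    NormedSpace.exp ((z * I) • x) = Complex.cos z • (1 : 𝔸) + (Complex.sin z * I) • x := by
  have hx_even (n : ℕ) : x ^ (2 * n) = 1 := by rw [pow_mul, sq, hx, one_pow]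
  rw [NormedSpace.exp_eq_tsum ℂ]
  refine HasSum.tsum_eq (HasSum.even_add_odd ?_ ?_)
  · convert (Complex.hasSum_cos' z).smul_const (1 : 𝔸) using 2 with n
    rw [smul_pow, hx_even, smul_smul, div_eq_inv_mul]
  · convert ((Complex.hasSum_sin' z).mul_right I).smul_const x using 2 with n
    rw [smul_pow, pow_succ x, hx_even, one_mul, smul_smul, div_mul_cancel₀ _ I_ne_zero,
      div_eq_inv_mul]

theorem conjTranspose_rotGate {d : ℕ} {σ : Matrix (Fin d) (Fin d) ℂ} (hσ : σᴴ = σ)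
    (hinv : σ * σ = 1) (β : ℝ) :
    (rotGate d σ β)ᴴ = (Real.cos (β / 2) : ℂ) • 1 + (Real.sin (β / 2) * I : ℂ) • σ := by
  have hstar : star (-(β / 2 : ℝ) * I : ℂ) = ((β / 2 : ℝ) : ℂ) * I := by simp
  rw [rotGate, ← exp_conjTranspose, conjTranspose_smul, hσ, hstar,
    NormedSpace.exp_mul_I_smul_of_mul_self_eq_one hinv, ofReal_cos, ofReal_sin]

theorem trace_conjTranspose_mul_rotGate_mul {d : ℕ} {σ : Matrix (Fin d) (Fin d) ℂ}
    (hσ : σᴴ = σ) (hinv : σ * σ = 1) (U A B : Matrix (Fin d) (Fin d) ℂ) (β : ℝ) :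
    ((A * rotGate d σ β * B)ᴴ * U).trace =
      Real.cos (β / 2) * (Bᴴ * Aᴴ * U).trace
        + Real.sin (β / 2) * I * (Bᴴ * σ * Aᴴ * U).trace := by
  simp only [conjTranspose_mul, conjTranspose_rotGate hσ hinv, mul_add, add_mul, mul_smul_comm,
    smul_mul_assoc, mul_one, trace_add, trace_smul, smul_eq_mul, Matrix.mul_assoc]

theorem sq_norm_cos_half_mul_add_sin_half_mul_I_mul (p s : ℂ) (β : ℝ) :
    ‖Real.cos (β / 2) * p + Real.sin (β / 2) * I * s‖ ^ 2 =
      (‖p‖ ^ 2 + ‖s‖ ^ 2) / 2 + (‖p‖ ^ 2 - ‖s‖ ^ 2) / 2 * Real.cos β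
        + (p * (starRingEnd ℂ) s).im * Real.sin β := by
  have hcos : Real.cos β = Real.cos (β / 2) ^ 2 - Real.sin (β / 2) ^ 2 := by
    rw [← Real.cos_two_mul', mul_div_cancel₀ β two_ne_zero]
  have hsin : Real.sin β = 2 * Real.sin (β / 2) * Real.cos (β / 2) := by
    rw [← Real.sin_two_mul, mul_div_cancel₀ β two_ne_zero]
  have hpyth := Real.sin_sq_add_cos_sq (β / 2)
  simp only [Complex.sq_norm, normSq_apply, add_re, add_im, mul_re, mul_im, ofReal_re, ofReal_im,
    I_re, I_im, conj_re, conj_im, hcos, hsin]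
  linear_combination (p.re * p.re + p.im * p.im + s.re * s.re + s.im * s.im) / 2 * hpyth

theorem hasDerivAt_of_eq_sinusoid {f : ℝ → ℝ} {K a b : ℝ}
    (hf : ∀ β, f β = K + a * Real.cos β + b * Real.sin β) (α : ℝ) :
    HasDerivAt f ((1 / 2) * (f (α + Real.pi / 2) - f (α - Real.pi / 2))) α := by
  have hderiv : HasDerivAt f (a * -Real.sin α + b * Real.cos α) α := by
    rw [funext hf]
    exact (((Real.hasDerivAt_cos α).const_mul a).const_add K).add
      ((Real.hasDerivAt_sin α).const_mul b)
  convert hderiv using 1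
  rw [hf, hf, Real.cos_add_pi_div_two, Real.sin_add_pi_div_two, Real.cos_sub_pi_div_two,
    Real.sin_sub_pi_div_two]
  ring

theorem stmt15_general (d : ℕ) (U A B σ : Matrix (Fin d) (Fin d) ℂ)
    (hherm : σᴴ = σ) (hinv : σ * σ = 1) (α : ℝ) :
    HasDerivAt (fun β : ℝ => CHSTd d U (A * rotGate d σ β * B))
      ((1 / 2) * (CHSTd d U (A * rotGate d σ (α + Real.pi / 2) * B) -
        CHSTd d U (A * rotGate d σ (α - Real.pi / 2) * B))) α := by
  set p := (Bᴴ * Aᴴ * U).trace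
  set s := (Bᴴ * σ * Aᴴ * U).trace
  refine hasDerivAt_of_eq_sinusoid (K := 1 - (‖p‖ ^ 2 + ‖s‖ ^ 2) / 2 / (d : ℝ) ^ 2)
    (a := -((‖p‖ ^ 2 - ‖s‖ ^ 2) / 2 / (d : ℝ) ^ 2))
    (b := -((p * (starRingEnd ℂ) s).im / (d : ℝ) ^ 2))
    (fun β => ?_) α
  rw [CHSTd, trace_conjTranspose_mul_rotGate_mul hherm hinv,
    sq_norm_cos_half_mul_add_sin_half_mul_I_mul]
  ring

/-- **parameter-shift rule for `C_HST`.** For `d × d` unitaries `U,A,B`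
and a Hermitian involution `σ`, the map `f(α) = C_HST(U, A e^{−iασ/2} B)` is
differentiable with `f'(α) = (1/2)(f(α + π/2) − f(α − π/2))` for all real `α`. -/
theorem stmt15 (d : ℕ) (hd : 1 ≤ d) (U A B σ : Matrix (Fin d) (Fin d) ℂ)
    (hU : U ∈ Matrix.unitaryGroup (Fin d) ℂ)
    (hA : A ∈ Matrix.unitaryGroup (Fin d) ℂ)
    (hB : B ∈ Matrix.unitaryGroup (Fin d) ℂ)
    (hherm : σᴴ = σ) (hinv : σ * σ = 1) (α : ℝ) :
    HasDerivAt (fun β : ℝ => CHSTd d U (A * rotGate d σ β * B))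
      ((1 / 2) * (CHSTd d U (A * rotGate d σ (α + Real.pi / 2) * B) -
        CHSTd d U (A * rotGate d σ (α - Real.pi / 2) * B))) α :=
  stmt15_general d U A B σ hherm hinv α

end
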